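/- (Hyperplane-barrier property) Let f : ℤⁿ → ℝ ∪ {+∞} be integrally convex, x̂ ∈ dom f, q ∈ ℤ, and 1 ≤ i ≤ n. If x̂_i < q and f(x̂) ≤ f(y) for all y ∈ ℤⁿ with y_i = q, then f(x̂) ≤ f(z) for all z ∈ ℤⁿ with z_i ≥ q. -/

import Mathlib

open scoped BigOperators

noncomputable section

/-- Integer neighborhood `N(x)` of a real point. -/
def intNbhd {n : ℕ} (x : Fin n → ℝ) : Set (Fin n → ℤ) :=
  {z | ∀ i, |x i - (z i : ℝ)| < 1}

/-- Local convex extension of `f : ℤⁿ → ℝ ∪ {+∞}`. -/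
noncomputable def localExt {n : ℕ} (f : (Fin n → ℤ) → EReal) (x : Fin n → ℝ) : EReal :=
  sInf { v : EReal | ∃ (m : ℕ) (lam : Fin m → ℝ) (y : Fin m → (Fin n → ℤ)),
      (∀ j, 0 ≤ lam j) ∧ (∑ j, lam j) = 1 ∧ (∀ j, y j ∈ intNbhd x) ∧
      (∀ i, (∑ j, lam j * ((y j i : ℝ))) = x i) ∧
      v = ∑ j, (((lam j : ℝ) : EReal) * f (y j)) }

/-- A function is integrally convex if its local convex extension is convex. -/
def IsIntegrallyConvexFn {n : ℕ} (f : (Fin n → ℤ) → EReal) : Prop :=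
  ∀ x y : Fin n → ℝ, ∀ t : ℝ, 0 ≤ t → t ≤ 1 →
    localExt f (fun i => t * x i + (1 - t) * y i) ≤
      ((t : ℝ) : EReal) * localExt f x + (((1 - t : ℝ)) : EReal) * localExt f y

/-- Coercion of an integer point to a real point. -/
def realify {n : ℕ} (z : Fin n → ℤ) : Fin n → ℝ := fun i => (z i : ℝ)

/-- A set `S ⊆ ℤⁿ` is integrally convex. -/
def IsIntegrallyConvexSet {n : ℕ} (S : Set (Fin n → ℤ)) : Prop :=
  ∀ x : Fin n → ℝ, x ∈ convexHull ℝ (realify '' S) →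
    x ∈ convexHull ℝ (realify '' (S ∩ intNbhd x))

/-!
The hyperplane `{y | y i = q}` separates `xhat` from any `z` with `q < z i`, so some point `p` of the
segment `[xhat, z]` lies on it. Every integer neighbour of `p` lies on the hyperplane too, hence
`f xhat ≤ f̃ p`; convexity of `f̃` bounds `f̃ p` by `t f xhat + (1 - t) f z` with `0 < t < 1`,
and this forces `f xhat ≤ f z`.
-/

lemma EReal.coe_finset_sum {ι : Type*} (s : Finset ι) (g : ι → ℝ) :
    ((∑ j ∈ s, g j : ℝ) : EReal) = ∑ j ∈ s, (g j : EReal) :=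
  map_sum (⟨⟨(↑), EReal.coe_zero⟩, EReal.coe_add⟩ : ℝ →+ EReal) g s

lemma EReal.coe_le_of_le_convexComb {c t : ℝ} {w : EReal} (ht1 : t < 1)
    (h : (c : EReal) ≤ (t : EReal) * c + ((1 - t : ℝ) : EReal) * w) : (c : EReal) ≤ w := by
  induction w using EReal.rec with
  | bot =>
    rw [EReal.coe_mul_bot_of_pos (by linarith), EReal.add_bot] at h
    exact absurd h (EReal.coe_ne_bot c ∘ le_bot_iff.mp)
  | top => exact le_top
  | coe s =>
    rw [← EReal.coe_mul, ← EReal.coe_mul, ← EReal.coe_add, EReal.coe_le_coe_iff] at h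
    exact EReal.coe_le_coe_iff.mpr (by nlinarith)

lemma exists_convexComb_eq_of_lt_of_lt {a q b : ℝ} (haq : a < q) (hqb : q < b) :
    ∃ t : ℝ, 0 < t ∧ t < 1 ∧ t * a + (1 - t) * b = q := by
  refine ⟨(b - q) / (b - a), div_pos (by linarith) (by linarith),
    (div_lt_one (by linarith)).mpr (by linarith), ?_⟩
  have hba : b - a ≠ 0 := by linarith
  field_simp
  ring

lemma eq_of_mem_intNbhd_of_eq_intCast {n : ℕ} {p : Fin n → ℝ} {y : Fin n → ℤ} {i : Fin n} {q : ℤ}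
    (hy : y ∈ intNbhd p) (hpi : p i = q) : y i = q := by
  have h := hy i
  rw [hpi, ← Int.cast_sub, ← Int.cast_abs, ← Int.cast_one, Int.cast_lt, abs_lt] at h
  omega

lemma localExt_realify_le {n : ℕ} (f : (Fin n → ℤ) → EReal) (w : Fin n → ℤ) :
    localExt f (realify w) ≤ f w :=
  sInf_le ⟨1, fun _ => 1, fun _ => w, fun _ => zero_le_one, by simp,
    fun _ _ => by simp [realify], fun _ => by simp [realify], by simp⟩

lemma coe_le_localExt_of_forall_mem_intNbhd {n : ℕ} (f : (Fin n → ℤ) → EReal) (p : Fin n → ℝ)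
    (c : ℝ) (hc : ∀ y ∈ intNbhd p, (c : EReal) ≤ f y) : (c : EReal) ≤ localExt f p := by
  refine le_sInf ?_
  rintro v ⟨m, lam, y, hlam, hsum, hy, -, rfl⟩
  calc (c : EReal) = ((∑ j, lam j * c : ℝ) : EReal) := by rw [← Finset.sum_mul, hsum, one_mul]
    _ = ∑ j, (lam j : EReal) * c := by simp only [EReal.coe_finset_sum, EReal.coe_mul]
    _ ≤ ∑ j, (lam j : EReal) * f (y j) := Finset.sum_le_sum fun j _ =>
      mul_le_mul_of_nonneg_left (hc (y j) (hy j)) (EReal.coe_nonneg.mpr (hlam j))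

lemma IsIntegrallyConvexFn.localExt_convexComb_le {n : ℕ} {f : (Fin n → ℤ) → EReal}
    (hf : IsIntegrallyConvexFn f) (x z : Fin n → ℤ) {t : ℝ} (ht0 : 0 ≤ t) (ht1 : t ≤ 1) :
    localExt f (fun j => t * realify x j + (1 - t) * realify z j) ≤
      (t : EReal) * f x + ((1 - t : ℝ) : EReal) * f z :=
  (hf _ _ t ht0 ht1).trans <| add_le_add
    (mul_le_mul_of_nonneg_left (localExt_realify_le f x) (EReal.coe_nonneg.mpr ht0))
    (mul_le_mul_of_nonneg_left (localExt_realify_le f z) (EReal.coe_nonneg.mpr (by linarith)))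

theorem hyperplane_barrier_property_general {n : ℕ}
    (f : (Fin n → ℤ) → EReal)
    (hf : IsIntegrallyConvexFn f)
    (xhat : Fin n → ℤ) (hxdom : f xhat ≠ ⊤)
    (q : ℤ) (i : Fin n) (hxq : xhat i < q)
    (hbar : ∀ y : Fin n → ℤ, y i = q → f xhat ≤ f y) :
    ∀ z : Fin n → ℤ, q ≤ z i → f xhat ≤ f z := by
  intro z hz
  rcases hz.eq_or_lt with hq | hq
  · exact hbar z hq.symm
  rcases eq_or_ne (f xhat) ⊥ with hx_bot | hx_bot
  · exact hx_bot ▸ bot_le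
  lift f xhat to ℝ using ⟨hxdom, hx_bot⟩ with c hc
  obtain ⟨t, ht0, ht1, hti⟩ :=
    exists_convexComb_eq_of_lt_of_lt (Int.cast_lt.mpr hxq : (xhat i : ℝ) < q) (Int.cast_lt.mpr hq)
  have hlow : (c : EReal) ≤ localExt f (fun j => t * realify xhat j + (1 - t) * realify z j) :=
    coe_le_localExt_of_forall_mem_intNbhd f _ c fun y hy =>
      hbar y (eq_of_mem_intNbhd_of_eq_intCast hy hti)
  have hkey := hlow.trans (hf.localExt_convexComb_le xhat z ht0.le ht1.le)
  rw [← hc] at hkey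
  exact EReal.coe_le_of_le_convexComb ht1 hkey

/-- Hyperplane-barrier property for integrally convex functions. -/
theorem hyperplane_barrier_property {n : ℕ}
    (f : (Fin n → ℤ) → EReal) (hbot : ∀ x, f x ≠ ⊥)
    (hf : IsIntegrallyConvexFn f)
    (xhat : Fin n → ℤ) (hxdom : f xhat ≠ ⊤)
    (q : ℤ) (i : Fin n) (hxq : xhat i < q)
    (hbar : ∀ y : Fin n → ℤ, y i = q → f xhat ≤ f y) :
    ∀ z : Fin n → ℤ, q ≤ z i → f xhat ≤ f z :=
  hyperplane_barrier_property_general f hf xhat hxdom q i hxq hbar
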